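/- In the q-shuffle algebra V on letters x, y, for every natural number n, q·(x ⋆ (x(yyxx)^n)) − q^{-1}·((x(yyxx)^n) ⋆ x) = (q^3 − q^{-1})·(xxyy)^n xx, where (xxyy)^n xx is a concatenation word. -/

import Mathlib

noncomputable section

/-- The letter `x`. -/
def bX : Bool := false
/-- The letter `y`. -/
def bY : Bool := true

/-- The bilinear pairing on letters: `⟨x,x⟩ = ⟨y,y⟩ = 2`, `⟨x,y⟩ = ⟨y,x⟩ = -2`. -/
def qbr (a b : Bool) : ℤ := if a = b then 2 else -2

/-- The sum `⟨a, w₁⟩ + ⋯ + ⟨a, wₙ⟩` for a letter `a` and a word `w`. -/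
def qE (a : Bool) (w : List Bool) : ℤ := (w.map (qbr a)).sum

/-- Linear map on the free algebra (words-indexed finsupps) given by prepending a letter. -/
def qcons (F : Type*) [Field F] (a : Bool) :
    (List Bool →₀ F) →ₗ[F] (List Bool →₀ F) :=
  Finsupp.lmapDomain F F (List.cons a)

/-- The q-shuffle product of two words, as an element of the free algebra `List Bool →₀ F`.
Defined by the recursion `u ⋆ v = u₁((u₂⋯u_r) ⋆ v) + q^{⟨v₁,u₁⟩+⋯+⟨v₁,u_r⟩} v₁(u ⋆ (v₂⋯v_s))`. -/
def qsh {F : Type*} [Field F] (q : F) : List Bool → List Bool → (List Bool →₀ F)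
  | [], v => Finsupp.single v 1
  | a :: u, [] => Finsupp.single (a :: u) 1
  | a :: u, b :: v =>
      qcons F a (qsh q u (b :: v)) +
        (q ^ (qbr b a + qE b u)) • qcons F b (qsh q (a :: u) v)
  termination_by u v => u.length + v.length
  decreasing_by all_goals (simp only [List.length_cons]; omega)

/-- Concatenation power of a word. -/
def wpow (w : List Bool) : ℕ → List Bool
  | 0 => []
  | n + 1 => w ++ wpow w n

def wXXYY : List Bool := [bX, bX, bY, bY]
def wYYXX : List Bool := [bY, bY, bX, bX]
def wXY : List Bool := [bX, bY]
def wYX : List Bool := [bY, bX]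

lemma qsh_nil_left {F : Type*} [Field F] (q : F) (v : List Bool) :
    qsh q [] v = Finsupp.single v 1 := by rw [qsh]

lemma qsh_nil_right {F : Type*} [Field F] (q : F) (a : Bool) (u : List Bool) :
    qsh q (a :: u) [] = Finsupp.single (a :: u) 1 := by rw [qsh]

lemma qsh_cons {F : Type*} [Field F] (q : F) (a b : Bool) (u v : List Bool) :
    qsh q (a :: u) (b :: v) = qcons F a (qsh q u (b :: v)) +
        (q ^ (qbr b a + qE b u)) • qcons F b (qsh q (a :: u) v) := by rw [qsh]

lemma qcons_single {F : Type*} [Field F] (a : Bool) (w : List Bool) (c : F) :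
    qcons F a (Finsupp.single w c) = Finsupp.single (a :: w) c :=
  Finsupp.mapDomain_single

lemma qE_nil (a : Bool) : qE a [] = 0 := rfl

lemma qE_cons (a b : Bool) (t : List Bool) : qE a (b :: t) = qbr a b + qE a t := by
  simp [qE]

lemma qbr_XX : qbr bX bX = 2 := rfl
lemma qbr_YY : qbr bY bY = 2 := rfl
lemma qbr_XY : qbr bX bY = -2 := rfl
lemma qbr_YX : qbr bY bX = -2 := rfl

lemma qE_append (a : Bool) (u v : List Bool) : qE a (u ++ v) = qE a u + qE a v := by
  simp [qE]

lemma qE_X_pow (n : ℕ) : qE bX (wpow wYYXX n) = 0 := by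
  induction n with
  | zero => rfl
  | succ n ih =>
      rw [wpow, qE_append, ih, wYYXX]
      simp only [qE_cons, qE_nil, qbr_XX, qbr_XY]
      ring

lemma qE_s1 (n : ℕ) : qE bX (bY :: bX :: bX :: wpow wYYXX n) = 2 := by
  simp only [qE_cons, qbr_XY, qbr_XX, qE_X_pow]; ring

lemma qE_s2 (n : ℕ) : qE bX (bX :: bX :: wpow wYYXX n) = 4 := by
  simp only [qE_cons, qbr_XX, qE_X_pow]; ring

lemma qE_s3 (n : ℕ) : qE bX (bX :: wpow wYYXX n) = 2 := by
  simp only [qE_cons, qbr_XX, qE_X_pow]; ring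

lemma step3 {F : Type*} [Field F] {q : F} (hq : q ≠ 0) (t : List Bool) (h0 : qE bX t = 0)
    (ih : q^(4:ℤ) • qsh q [bX] t - qsh q t [bX]
        = (q^(4:ℤ)-1) • Finsupp.single (bX::t) (1:F)) :
    q^(2:ℤ) • qsh q [bX] (bX::t) - qsh q (bX::t) [bX]
        = (q^(4:ℤ)-1) • Finsupp.single (bX::bX::t) (1:F) := by
  have key : q^(4:ℤ) • qcons F bX (qsh q [bX] t) - qcons F bX (qsh q t [bX])
      = (q^(4:ℤ)-1) • Finsupp.single (bX::bX::t) (1:F) := by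
    have h := congrArg (qcons F bX) ih
    simpa [map_sub, map_smul, qcons_single] using h
  rw [qsh_cons, qsh_cons, qsh_nil_left, qsh_nil_right, qcons_single]
  simp only [qE_nil, qbr_XX, h0, add_zero]
  have e1 : q^(2:ℤ) * q^(2:ℤ) = q^(4:ℤ) := by rw [← zpow_add₀ hq]; norm_num
  rw [← sub_eq_zero] at key ⊢
  rw [← key]
  simp only [smul_add, smul_smul, e1]
  module

lemma step2 {F : Type*} [Field F] {q : F} (hq : q ≠ 0) (s3 : List Bool) (h2 : qE bX s3 = 2)
    (h : q^(2:ℤ) • qsh q [bX] s3 - qsh q s3 [bX]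
        = (q^(4:ℤ)-1) • Finsupp.single (bX::s3) (1:F)) :
    qsh q [bX] (bX::s3) = qsh q (bX::s3) [bX] := by
  have key : q^(2:ℤ) • qcons F bX (qsh q [bX] s3) - qcons F bX (qsh q s3 [bX])
      = (q^(4:ℤ)-1) • Finsupp.single (bX::bX::s3) (1:F) := by
    have h' := congrArg (qcons F bX) h
    simpa [map_sub, map_smul, qcons_single] using h'
  rw [qsh_cons, qsh_cons, qsh_nil_left, qsh_nil_right, qcons_single]
  simp only [qE_nil, qbr_XX, h2, add_zero]
  have e1 : (2:ℤ) + 2 = 4 := by norm_num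
  rw [e1]
  rw [← sub_eq_zero] at key ⊢
  rw [← key]
  module

lemma step1 {F : Type*} [Field F] {q : F} (hq : q ≠ 0) (s2 : List Bool) (h4 : qE bX s2 = 4)
    (h : qsh q [bX] s2 = qsh q s2 [bX]) :
    q^(2:ℤ) • qsh q [bX] (bY::s2) - qsh q (bY::s2) [bX] = 0 := by
  rw [qsh_cons, qsh_cons, qsh_nil_left, qsh_nil_right, qcons_single, h]
  simp only [qE_nil, qbr_YX, qbr_XY, h4, add_zero]
  have e2 : q^(2:ℤ) * q^(-2:ℤ) = 1 := by rw [← zpow_add₀ hq]; norm_num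
  have e3 : (-2:ℤ) + 4 = 2 := by norm_num
  rw [e3]
  simp only [smul_add, smul_smul, e2, one_smul]
  module

lemma step0 {F : Type*} [Field F] {q : F} (hq : q ≠ 0) (s1 : List Bool) (h2 : qE bX s1 = 2)
    (h : q^(2:ℤ) • qsh q [bX] s1 - qsh q s1 [bX] = 0) :
    q^(4:ℤ) • qsh q [bX] (bY::s1) - qsh q (bY::s1) [bX]
        = (q^(4:ℤ)-1) • Finsupp.single (bX::bY::s1) (1:F) := by
  have key : q^(2:ℤ) • qcons F bY (qsh q [bX] s1) - qcons F bY (qsh q s1 [bX]) = 0 := by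
    have h' := congrArg (qcons F bY) h
    simpa [map_sub, map_smul] using h'
  rw [qsh_cons, qsh_cons, qsh_nil_left, qsh_nil_right, qcons_single]
  simp only [qE_nil, qbr_YX, qbr_XY, h2, add_zero]
  have e4 : q^(4:ℤ) * q^(-2:ℤ) = q^(2:ℤ) := by rw [← zpow_add₀ hq]; norm_num
  have e5 : (-2:ℤ) + 2 = 0 := by norm_num
  rw [e5, zpow_zero]
  rw [← sub_eq_zero] at key ⊢
  rw [← key]
  simp only [smul_add, smul_smul, e4, one_smul]
  module

lemma key_lemma {F : Type*} [Field F] {q : F} (hq : q ≠ 0) (n : ℕ) :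
    q^(4:ℤ) • qsh q [bX] (wpow wYYXX n) - qsh q (wpow wYYXX n) [bX]
      = (q^(4:ℤ)-1) • Finsupp.single (bX :: wpow wYYXX n) (1:F) := by
  induction n with
  | zero =>
      rw [wpow, qsh_nil_left, qsh_nil_right, sub_smul, one_smul]
  | succ n ih =>
      have hwp : wpow wYYXX (n+1) = bY::bY::bX::bX::wpow wYYXX n := rfl
      rw [hwp]
      exact step0 hq _ (qE_s1 n)
        (step1 hq _ (qE_s2 n)
          (step2 hq _ (qE_s3 n)
            (step3 hq _ (qE_X_pow n) ih)))

lemma word_eq (n : ℕ) : wpow wXXYY n ++ [bX, bX] = bX :: bX :: wpow wYYXX n := by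
  induction n with
  | zero => rfl
  | succ n ih =>
      show wXXYY ++ wpow wXXYY n ++ [bX, bX] = bX :: bX :: (wYYXX ++ wpow wYYXX n)
      rw [List.append_assoc, ih]
      rfl

/-- `[x, x(yyxx)^n]_q = (q³ − q^{-1})(xxyy)^n xx` in the q-shuffle algebra. -/
theorem stmt5 {F : Type*} [Field F] [CharZero F] (q : F) (hq : q ≠ 0)
    (hq1 : ∀ m : ℕ, 0 < m → q ^ m ≠ 1) (n : ℕ) :
    q • qsh q [bX] ([bX] ++ wpow wYYXX n)
        - q ^ (-1 : ℤ) • qsh q ([bX] ++ wpow wYYXX n) [bX]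
      = (q ^ (3 : ℤ) - q ^ (-1 : ℤ)) • Finsupp.single (wpow wXXYY n ++ [bX, bX]) (1 : F) := by
  rw [word_eq, List.singleton_append]
  have key : q^(4:ℤ) • qcons F bX (qsh q [bX] (wpow wYYXX n))
      - qcons F bX (qsh q (wpow wYYXX n) [bX])
      = (q^(4:ℤ)-1) • Finsupp.single (bX::bX::wpow wYYXX n) (1:F) := by
    have h := congrArg (qcons F bX) (key_lemma hq n)
    simpa [map_sub, map_smul, qcons_single] using h
  rw [qsh_cons, qsh_cons, qsh_nil_left, qsh_nil_right, qcons_single]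
  simp only [qE_nil, qbr_XX, qE_X_pow, add_zero]
  have key2 := congrArg (fun z : (List Bool →₀ F) => q^(-1:ℤ) • z) key
  simp only [smul_sub, smul_smul] at key2
  rw [← sub_eq_zero] at key2 ⊢
  rw [← key2]
  match_scalars
  all_goals field_simp
  all_goals ring
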